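/- For the Dunkl-Appell Gamma-type operator, D_n*(t²; x) = x² + (x/n)·[2μ·(e_μ(−nx)/e_μ(nx))·(A(−1)/A(1)) + 2A'(1)/A(1) + 2λ + 4] + (2μ/n²)·(e_μ(−nx)/e_μ(nx))·(A'(1)+A'(−1))/A(1) + (2μ²/n²)·(A(1)−A(−1))/A(1) + (μ(2λ+3)/n²)·(e_μ(−nx)/e_μ(nx))·(A(1)−A(−1))/A(1) + (1/n²)·[A''(1)/A(1) + (2λ+4)A'(1)/A(1) + (λ+1)(λ+2)]. -/

import Mathlib

open scoped BigOperators
open MeasureTheory Filter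

/-- Parity indicator: 0 for even, 1 for odd. -/
def theta (j : ℕ) : ℝ := if j % 2 = 1 then 1 else 0

/-- Dunkl coefficients via the recursion. -/
noncomputable def gamRec (μ : ℝ) : ℕ → ℝ
  | 0 => 1
  | k + 1 => ((k : ℝ) + 1 + 2 * μ * theta (k + 1)) * gamRec μ k

/-- Dunkl exponential. -/
noncomputable def emu (μ : ℝ) (x : ℝ) : ℝ := ∑' k : ℕ, x ^ k / gamRec μ k

/-- Dunkl-Appell polynomials. -/
noncomputable def pk (μ : ℝ) (a : ℕ → ℝ) (k : ℕ) (x : ℝ) : ℝ :=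
  ∑ j ∈ Finset.range (k + 1),
    (gamRec μ k / (gamRec μ j * gamRec μ (k - j))) * a (k - j) * x ^ j

/-- The analytic function A. -/
noncomputable def Afun (μ : ℝ) (a : ℕ → ℝ) (t : ℝ) : ℝ := ∑' r : ℕ, a r * t ^ r / gamRec μ r

/-- Dunkl-Appell Gamma-type (Szász–Durrmeyer) operator. -/
noncomputable def Dop (μ lam : ℝ) (a : ℕ → ℝ) (n : ℕ) (f : ℝ → ℝ) (x : ℝ) : ℝ :=
  (1 / (emu μ (n * x) * Afun μ a 1)) *
    ∑' k : ℕ, (pk μ a k (n * x) / gamRec μ k) *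
      ((n : ℝ) ^ ((k : ℝ) + 2 * μ * theta k + lam + 1) /
        Real.Gamma ((k : ℝ) + 2 * μ * theta k + lam + 1)) *
      ∫ t in Set.Ioi (0 : ℝ), Real.exp (-(n : ℝ) * t) * t ^ ((k : ℝ) + 2 * μ * theta k + lam) * f t

/-- Analyticity (radius of convergence > 1) hypothesis for A. -/
def AnalyticHyp (μ : ℝ) (a : ℕ → ℝ) : Prop :=
  ∃ R > (1 : ℝ), ∀ t : ℝ, |t| < R → Summable (fun r : ℕ => a r * t ^ r / gamRec μ r)

/-- Modulus of continuity on [0,∞). -/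
noncomputable def modCont (f : ℝ → ℝ) (δ : ℝ) : ℝ :=
  sSup {d : ℝ | ∃ x y : ℝ, 0 ≤ x ∧ 0 ≤ y ∧ |x - y| ≤ δ ∧ d = |f x - f y|}

/-- sup norm on [0,∞). -/
noncomputable def CBnorm (g : ℝ → ℝ) : ℝ := sSup ((fun x => |g x|) '' Set.Ici 0)

/-- Dunkl coefficients via the Gamma-function formulas of the paper. -/
noncomputable def gamG (μ : ℝ) (m : ℕ) : ℝ :=
  if m % 2 = 0 then
    2 ^ m * (Nat.factorial (m / 2)) * Real.Gamma ((m / 2 : ℕ) + μ + 1 / 2) / Real.Gamma (μ + 1 / 2)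
  else
    2 ^ m * (Nat.factorial ((m - 1) / 2)) * Real.Gamma (((m - 1) / 2 : ℕ) + μ + 3 / 2) / Real.Gamma (μ + 1 / 2)

/-!
The Gamma integral turns the `k`-th term of `D_n*(t²; x)` into
`q_k (α_k + λ + 1)(α_k + λ + 2) / n²`, where `α_k = k + 2μθ_k` (`dunklNum μ k`) and
`q_k = p_k(nx) / γ_μ(k) = ∑_{i + j = k} (nx)^i / γ_μ(i) · a_j / γ_μ(j)` is a Cauchy product.
Since `θ_{i+j} = θ_i + θ_j - 2θ_iθ_j`, we have `α_{i+j} = α_i + α_j - 4μθ_iθ_j`, so `∑ α_k q_k`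
and `∑ α_k² q_k` split into products of sums of the two factors weighted by `1, θ, α, θα, α²`.
For the exponential factor these follow from `α_{j+1} y^{j+1} / γ_μ(j+1) = y · y^j / γ_μ(j)` and
`θ_j = (1 - (-1)^j) / 2`, which brings in `e_μ(-y)`; for the factor `a_j / γ_μ(j)` they are
values of `A`, `A'`, `A''` at `±1`, obtained by differentiating the power series of `A`
termwise inside its disc of convergence.
-/

open Finset

lemma theta_eq (j : ℕ) : theta j = (1 - (-1) ^ j) / 2 := by
  rcases Nat.even_or_odd j with h | h
  · rw [h.neg_one_pow, theta, if_neg (Nat.not_odd_iff_even.2 h ∘ Nat.odd_iff.2)]; norm_num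
  · rw [h.neg_one_pow, theta, if_pos (Nat.odd_iff.1 h)]; norm_num

lemma theta_zero : theta 0 = 0 := by simp [theta]

lemma theta_succ (j : ℕ) : theta (j + 1) = 1 - theta j := by
  rw [theta_eq, theta_eq, pow_succ]; ring

lemma theta_add (i j : ℕ) : theta (i + j) = theta i + theta j - 2 * theta i * theta j := by
  rw [theta_eq, theta_eq, theta_eq, pow_add]; ring

lemma theta_mul_self (j : ℕ) : theta j * theta j = theta j := by
  unfold theta; split_ifs <;> norm_num

lemma hasSum_theta_mul {f : ℕ → ℝ} {a b : ℝ} (h : HasSum f a)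
    (h' : HasSum (fun j => (-1) ^ j * f j) b) : HasSum (theta * f) ((a - b) / 2) :=
  ((h.sub h').div_const 2).congr_fun fun j => by rw [Pi.mul_apply, theta_eq]; ring

lemma hasSum_of_hasSum_succ {f g : ℕ → ℝ} {a : ℝ} (h0 : f 0 = 0)
    (hf : ∀ j, f (j + 1) = g j) (h : HasSum g a) : HasSum f a :=
  (hasSum_nat_add_iff' 1).1 (by simpa [h0, hf] using h)

noncomputable def dunklNum (μ : ℝ) (k : ℕ) : ℝ := k + 2 * μ * theta k

lemma dunklNum_zero (μ : ℝ) : dunklNum μ 0 = 0 := by simp [dunklNum, theta_zero]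

lemma dunklNum_succ (μ : ℝ) (k : ℕ) :
    dunklNum μ (k + 1) = dunklNum μ k + 1 + 2 * μ * (1 - 2 * theta k) := by
  rw [dunklNum, dunklNum, theta_succ]; push_cast; ring

lemma dunklNum_add (μ : ℝ) (i j : ℕ) :
    dunklNum μ (i + j) = dunklNum μ i + dunklNum μ j - 4 * μ * theta i * theta j := by
  rw [dunklNum, dunklNum, dunklNum, theta_add]; push_cast; ring

lemma natCast_le_dunklNum {μ : ℝ} (hμ : 0 ≤ μ) (k : ℕ) : (k : ℝ) ≤ dunklNum μ k := by
  have : 0 ≤ theta k := by unfold theta; split_ifs <;> norm_num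
  unfold dunklNum; nlinarith

lemma gamRec_succ (μ : ℝ) (k : ℕ) : gamRec μ (k + 1) = dunklNum μ (k + 1) * gamRec μ k := by
  rw [gamRec, dunklNum]; push_cast; ring

lemma factorial_le_gamRec {μ : ℝ} (hμ : 0 ≤ μ) (k : ℕ) :
    (k.factorial : ℝ) ≤ gamRec μ k := by
  induction k with
  | zero => simp [gamRec]
  | succ k ih =>
    rw [Nat.factorial_succ, Nat.cast_mul, gamRec_succ]
    exact mul_le_mul (natCast_le_dunklNum hμ _) ih (by positivity)
      ((Nat.cast_nonneg _).trans (natCast_le_dunklNum hμ _))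

lemma gamRec_pos {μ : ℝ} (hμ : 0 ≤ μ) (k : ℕ) : 0 < gamRec μ k :=
  (Nat.cast_pos.2 k.factorial_pos).trans_le (factorial_le_gamRec hμ k)

def cauchyProduct (u v : ℕ → ℝ) (k : ℕ) : ℝ := ∑ ij ∈ antidiagonal k, u ij.1 * v ij.2

lemma hasSum_cauchyProduct {u v : ℕ → ℝ} {U V : ℝ} (hu : HasSum u U) (hv : HasSum v V) :
    HasSum (cauchyProduct u v) (U * V) := by
  have hu' : Summable fun j => ‖u j‖ := hu.summable.norm
  have hv' : Summable fun j => ‖v j‖ := hv.summable.norm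
  rw [← hu.tsum_eq, ← hv.tsum_eq,
    tsum_mul_tsum_eq_tsum_sum_antidiagonal_of_summable_norm hu' hv']
  exact (summable_norm_sum_mul_antidiagonal_of_summable_norm hu' hv').of_norm.hasSum

lemma dunklNum_mul_cauchyProduct (μ : ℝ) (u v : ℕ → ℝ) (k : ℕ) :
    dunklNum μ k * cauchyProduct u v k =
      cauchyProduct (dunklNum μ * u) v k + cauchyProduct u (dunklNum μ * v) k
        - 4 * μ * cauchyProduct (theta * u) (theta * v) k := by
  simp only [cauchyProduct, mul_sum, ← sum_add_distrib, ← sum_sub_distrib]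
  refine sum_congr rfl fun ij hij => ?_
  rw [← mem_antidiagonal.1 hij, dunklNum_add]
  simp only [Pi.mul_apply]
  ring

lemma dunklNum_sq_mul_cauchyProduct (μ : ℝ) (u v : ℕ → ℝ) (k : ℕ) :
    dunklNum μ k ^ 2 * cauchyProduct u v k =
      cauchyProduct (dunklNum μ * (dunklNum μ * u)) v k
        + 2 * cauchyProduct (dunklNum μ * u) (dunklNum μ * v) k
        + cauchyProduct u (dunklNum μ * (dunklNum μ * v)) k
        - 8 * μ * (cauchyProduct (theta * (dunklNum μ * u)) (theta * v) k
          + cauchyProduct (theta * u) (theta * (dunklNum μ * v)) k)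
        + 16 * μ ^ 2 * cauchyProduct (theta * u) (theta * v) k := by
  simp only [cauchyProduct, mul_sum, ← sum_add_distrib, ← sum_sub_distrib]
  refine sum_congr rfl fun ij hij => ?_
  rw [← mem_antidiagonal.1 hij, dunklNum_add]
  simp only [Pi.mul_apply]
  linear_combination (16 * μ ^ 2 * u ij.1 * v ij.2) *
    (theta ij.2 * theta ij.2 * (theta_mul_self ij.1) + theta ij.1 * theta_mul_self ij.2)

structure HasDunklMoments (μ : ℝ) (u : ℕ → ℝ) (m mθ mα mθα mαα : ℝ) : Prop where
  hasSum : HasSum u m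
  hasSum_theta : HasSum (theta * u) mθ
  hasSum_dunklNum : HasSum (dunklNum μ * u) mα
  hasSum_theta_dunklNum : HasSum (theta * (dunklNum μ * u)) mθα
  hasSum_dunklNum_sq : HasSum (dunklNum μ * (dunklNum μ * u)) mαα

section CauchyProduct

variable {μ : ℝ} {u v : ℕ → ℝ} {U Uθ Uα Uθα Uαα V Vθ Vα Vθα Vαα : ℝ}

lemma HasDunklMoments.hasSum_dunklNum_mul_cauchyProduct
    (hu : HasDunklMoments μ u U Uθ Uα Uθα Uαα)
    (hv : HasDunklMoments μ v V Vθ Vα Vθα Vαα) :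
    HasSum (fun k => dunklNum μ k * cauchyProduct u v k)
      (Uα * V + U * Vα - 4 * μ * (Uθ * Vθ)) := by
  simp only [dunklNum_mul_cauchyProduct]
  exact ((hasSum_cauchyProduct hu.hasSum_dunklNum hv.hasSum).add
    (hasSum_cauchyProduct hu.hasSum hv.hasSum_dunklNum)).sub
    ((hasSum_cauchyProduct hu.hasSum_theta hv.hasSum_theta).mul_left (4 * μ))

lemma HasDunklMoments.hasSum_dunklNum_sq_mul_cauchyProduct
    (hu : HasDunklMoments μ u U Uθ Uα Uθα Uαα)
    (hv : HasDunklMoments μ v V Vθ Vα Vθα Vαα) :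
    HasSum (fun k => dunklNum μ k ^ 2 * cauchyProduct u v k)
      (Uαα * V + 2 * (Uα * Vα) + U * Vαα - 8 * μ * (Uθα * Vθ + Uθ * Vθα)
        + 16 * μ ^ 2 * (Uθ * Vθ)) := by
  simp only [dunklNum_sq_mul_cauchyProduct]
  exact (((((hasSum_cauchyProduct hu.hasSum_dunklNum_sq hv.hasSum).add
    ((hasSum_cauchyProduct hu.hasSum_dunklNum hv.hasSum_dunklNum).mul_left 2)).add
    (hasSum_cauchyProduct hu.hasSum hv.hasSum_dunklNum_sq)).sub
    (((hasSum_cauchyProduct hu.hasSum_theta_dunklNum hv.hasSum_theta).add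
      (hasSum_cauchyProduct hu.hasSum_theta hv.hasSum_theta_dunklNum)).mul_left (8 * μ))).add
    ((hasSum_cauchyProduct hu.hasSum_theta hv.hasSum_theta).mul_left (16 * μ ^ 2)))

end CauchyProduct

section DunklExponential

variable {μ : ℝ}

noncomputable def dunklTerm (μ y : ℝ) (j : ℕ) : ℝ := y ^ j / gamRec μ j

lemma summable_dunklTerm (hμ : 0 ≤ μ) (y : ℝ) : Summable (dunklTerm μ y) := by
  refine .of_norm_bounded (Real.summable_pow_div_factorial |y|) fun j => ?_
  rw [dunklTerm, norm_div, norm_pow, Real.norm_eq_abs, Real.norm_of_nonneg (gamRec_pos hμ j).le]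
  exact div_le_div_of_nonneg_left (by positivity) (by positivity) (factorial_le_gamRec hμ j)

lemma hasSum_dunklTerm (hμ : 0 ≤ μ) (y : ℝ) : HasSum (dunklTerm μ y) (emu μ y) :=
  (summable_dunklTerm hμ y).hasSum

lemma one_le_emu (hμ : 0 ≤ μ) {y : ℝ} (hy : 0 ≤ y) : 1 ≤ emu μ y := by
  have := (summable_dunklTerm hμ y).le_tsum 0 fun j _ =>
    div_nonneg (pow_nonneg hy j) (gamRec_pos hμ j).le
  simpa [dunklTerm, gamRec, emu] using this

lemma dunklNum_succ_mul_dunklTerm_succ (hμ : 0 ≤ μ) (y : ℝ) (j : ℕ) :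
    dunklNum μ (j + 1) * dunklTerm μ y (j + 1) = y * dunklTerm μ y j := by
  have hα : dunklNum μ (j + 1) ≠ 0 :=
    ((Nat.cast_pos.2 j.succ_pos).trans_le (natCast_le_dunklNum hμ _)).ne'
  have hγ := (gamRec_pos hμ j).ne'
  rw [dunklTerm, dunklTerm, gamRec_succ, pow_succ]
  field_simp

lemma hasDunklMoments_dunklTerm (hμ : 0 ≤ μ) (y : ℝ) :
    HasDunklMoments μ (dunklTerm μ y) (emu μ y) ((emu μ y - emu μ (-y)) / 2) (y * emu μ y)
      (y * (emu μ y + emu μ (-y)) / 2)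
      (y * (y * emu μ y + emu μ y + 2 * μ * emu μ (-y))) := by
  have hE := hasSum_dunklTerm hμ y
  have hθ : HasSum (theta * dunklTerm μ y) ((emu μ y - emu μ (-y)) / 2) :=
    hasSum_theta_mul hE <| (hasSum_dunklTerm hμ (-y)).congr_fun fun j => by
      rw [dunklTerm, dunklTerm, neg_pow y, mul_div_assoc]
  have hα : HasSum (dunklNum μ * dunklTerm μ y) (y * emu μ y) :=
    hasSum_of_hasSum_succ (by simp [dunklNum_zero]) (dunklNum_succ_mul_dunklTerm_succ hμ y)
      (hE.mul_left y)
  refine ⟨hE, hθ, hα, ?_, ?_⟩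
  · convert hasSum_of_hasSum_succ (f := theta * (dunklNum μ * dunklTerm μ y))
      (by simp [theta_zero]) (fun j => ?_) ((hE.sub hθ).mul_left y) using 1
    · ring
    · simp only [Pi.mul_apply, dunklNum_succ_mul_dunklTerm_succ hμ, theta_succ]
      ring
  · convert hasSum_of_hasSum_succ (f := dunklNum μ * (dunklNum μ * dunklTerm μ y))
      (by simp [dunklNum_zero]) (fun j => ?_)
      ((hα.add (hE.add ((hE.sub (hθ.mul_left 2)).mul_left (2 * μ)))).mul_left y) using 1
    · ring
    · rw [Pi.mul_apply, Pi.mul_apply, dunklNum_succ_mul_dunklTerm_succ hμ, dunklNum_succ]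
      simp only [Pi.mul_apply]
      ring

end DunklExponential

section PowerSeries

open Topology

variable {c : ℕ → ℝ} {R : ℝ}

lemma summable_succ_mul_abs_mul_pow (hc : ∀ t, |t| < R → Summable fun n => c n * t ^ n)
    {ρ : ℝ} (hρ : 0 ≤ ρ) (hρR : ρ < R) :
    Summable fun n : ℕ => (n + 1) * |c (n + 1)| * ρ ^ n := by
  obtain ⟨ρ', hρρ', hρ'R⟩ := exists_between hρR
  have hρ' : 0 < ρ' := hρ.trans_lt hρρ'
  have hs := (hc ρ' (by rwa [abs_of_pos hρ'])).abs
  have hM : ∀ n, |c n| * ρ' ^ n ≤ ∑' n, |c n * ρ' ^ n| := fun n => by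
    simpa [abs_mul, abs_of_pos (pow_pos hρ' n)] using hs.le_tsum n fun _ _ => abs_nonneg _
  have hq : ‖ρ / ρ'‖ < 1 := by
    rw [Real.norm_of_nonneg (by positivity), div_lt_one hρ']; exact hρρ'
  refine .of_nonneg_of_le (fun n => by positivity) (fun n => ?_)
    (((summable_pow_mul_geometric_of_norm_lt_one 1 hq).add
      (summable_geometric_of_norm_lt_one hq)).mul_left ((∑' n, |c n * ρ' ^ n|) / ρ'))
  calc ((n : ℝ) + 1) * |c (n + 1)| * ρ ^ n
      = ((n : ℝ) + 1) * (ρ / ρ') ^ n * (|c (n + 1)| * ρ' ^ (n + 1)) / ρ' := by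
        rw [div_pow]; field_simp; ring
    _ ≤ ((n : ℝ) + 1) * (ρ / ρ') ^ n * (∑' n, |c n * ρ' ^ n|) / ρ' := by
        gcongr; exact hM _
    _ = _ := by ring

lemma summable_succ_mul_mul_pow (hc : ∀ t, |t| < R → Summable fun n => c n * t ^ n)
    {t : ℝ} (ht : |t| < R) : Summable fun n : ℕ => (n + 1) * c (n + 1) * t ^ n :=
  .of_norm_bounded (summable_succ_mul_abs_mul_pow hc (abs_nonneg t) ht) fun n => by
    simp only [norm_mul, norm_pow, Real.norm_eq_abs]
    rw [abs_of_nonneg (by positivity : (0 : ℝ) ≤ n + 1)]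

lemma hasDerivAt_tsum_mul_pow (hc : ∀ t, |t| < R → Summable fun n => c n * t ^ n)
    {t : ℝ} (ht : |t| < R) :
    HasDerivAt (fun z => ∑' n, c n * z ^ n) (∑' n : ℕ, (n + 1) * c (n + 1) * t ^ n) t := by
  obtain ⟨ρ, htρ, hρR⟩ := exists_between ht
  have hball : ∀ z ∈ Set.Ioo (-ρ) ρ, |z| < R := fun z hz => (abs_lt.2 hz).trans hρR
  have ht' : t ∈ Set.Ioo (-ρ) ρ := abs_lt.1 htρ
  have hsplit : (fun z => ∑' n, c n * z ^ n) =ᶠ[𝓝 t]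
      fun z => c 0 + ∑' n, c (n + 1) * z ^ (n + 1) := by
    filter_upwards [isOpen_Ioo.mem_nhds ht'] with z hz
    rw [(hc z (hball z hz)).tsum_eq_zero_add]
    simp
  have hderiv := hasDerivAt_tsum_of_isPreconnected
    (summable_succ_mul_abs_mul_pow hc ((abs_nonneg t).trans htρ.le) hρR) isOpen_Ioo
    isPreconnected_Ioo (fun n z _ => (hasDerivAt_pow (n + 1) z).const_mul (c (n + 1)))
    (fun n z hz => ?_) ht' ((summable_nat_add_iff 1).2 (hc t ht)) ht'
  · refine (hderiv.const_add (c 0)).congr_of_eventuallyEq hsplit |>.congr_deriv ?_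
    refine tsum_congr fun n => ?_
    push_cast
    ring
  · rw [norm_mul, norm_mul, norm_pow, Real.norm_eq_abs, Real.norm_eq_abs, Nat.add_sub_cancel,
      Nat.abs_cast]
    push_cast
    have : |z| ^ n ≤ ρ ^ n := pow_le_pow_left₀ (abs_nonneg z) (abs_lt.2 hz).le n
    calc |c (n + 1)| * (((n : ℝ) + 1) * ‖z‖ ^ n)
        ≤ |c (n + 1)| * (((n : ℝ) + 1) * ρ ^ n) := by rw [Real.norm_eq_abs]; gcongr
      _ = _ := by ring

lemma hasSum_natCast_mul_mul_pow (hc : ∀ t, |t| < R → Summable fun n => c n * t ^ n)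
    {t : ℝ} (ht : |t| < R) :
    HasSum (fun n : ℕ => n * c n * t ^ n) (t * deriv (fun z => ∑' n, c n * z ^ n) t) := by
  rw [(hasDerivAt_tsum_mul_pow hc ht).deriv]
  refine hasSum_of_hasSum_succ (by simp) (fun n => ?_)
    ((summable_succ_mul_mul_pow hc ht).hasSum.mul_left t)
  push_cast
  ring

lemma hasSum_natCast_mul_natCast_sub_one_mul_mul_pow
    (hc : ∀ t, |t| < R → Summable fun n => c n * t ^ n) {t : ℝ} (ht : |t| < R) :
    HasSum (fun n : ℕ => n * (n - 1) * c n * t ^ n)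
      (t ^ 2 * deriv (deriv fun z => ∑' n, c n * z ^ n) t) := by
  have hc' : ∀ t, |t| < R → Summable fun n : ℕ => (n + 1) * c (n + 1) * t ^ n :=
    fun t ht => summable_succ_mul_mul_pow hc ht
  have hderiv : deriv (fun z => ∑' n, c n * z ^ n) =ᶠ[𝓝 t]
      fun z => ∑' n : ℕ, (n + 1) * c (n + 1) * z ^ n := by
    filter_upwards [(isOpen_lt continuous_abs continuous_const).mem_nhds ht] with z hz
    exact (hasDerivAt_tsum_mul_pow hc hz).deriv
  rw [hderiv.deriv_eq, (hasDerivAt_tsum_mul_pow hc' ht).deriv]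
  refine hasSum_of_hasSum_succ (by simp) (fun n => rfl) <|
    hasSum_of_hasSum_succ (by simp) (fun n => ?_)
      ((summable_succ_mul_mul_pow hc' ht).hasSum.mul_left (t ^ 2))
  push_cast
  ring

end PowerSeries

lemma hasDunklMoments_coeff {μ : ℝ} {a : ℕ → ℝ} (hA : AnalyticHyp μ a) :
    HasDunklMoments μ (fun r => a r / gamRec μ r) (Afun μ a 1)
      ((Afun μ a 1 - Afun μ a (-1)) / 2)
      (deriv (Afun μ a) 1 + μ * (Afun μ a 1 - Afun μ a (-1)))
      ((deriv (Afun μ a) 1 + deriv (Afun μ a) (-1)) / 2 + μ * (Afun μ a 1 - Afun μ a (-1)))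
      (deriv (deriv (Afun μ a)) 1 + deriv (Afun μ a) 1
        + 2 * μ * (deriv (Afun μ a) 1 + deriv (Afun μ a) (-1))
        + 2 * μ ^ 2 * (Afun μ a 1 - Afun μ a (-1))) := by
  obtain ⟨R, hR, hsum⟩ := hA
  set v := fun r => a r / gamRec μ r
  have hc : ∀ t, |t| < R → Summable fun n => v n * t ^ n :=
    fun t ht => (hsum t ht).congr fun r => by simp only [v]; ring
  have hAfun : Afun μ a = fun z => ∑' n, v n * z ^ n :=
    funext fun z => tsum_congr fun r => by simp only [v]; ring
  have h1 : |(1 : ℝ)| < R := by rwa [abs_one]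
  have hm1 : |(-1 : ℝ)| < R := by rwa [abs_neg, abs_one]
  have hV : HasSum v (Afun μ a 1) := by simpa [hAfun] using (hc 1 h1).hasSum
  have hVneg : HasSum (fun n => (-1) ^ n * v n) (Afun μ a (-1)) := by
    simpa [hAfun, mul_comm] using (hc (-1) hm1).hasSum
  have hD : HasSum (fun n : ℕ => n * v n) (deriv (Afun μ a) 1) := by
    simpa [hAfun] using hasSum_natCast_mul_mul_pow hc h1
  have hDneg : HasSum (fun n : ℕ => (-1) ^ n * (n * v n)) (-deriv (Afun μ a) (-1)) := by
    simpa [hAfun, mul_comm, mul_left_comm] using hasSum_natCast_mul_mul_pow hc hm1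
  have hD2 : HasSum (fun n : ℕ => n * (n - 1) * v n) (deriv (deriv (Afun μ a)) 1) := by
    simpa [hAfun] using hasSum_natCast_mul_natCast_sub_one_mul_mul_pow hc h1
  have hθ := hasSum_theta_mul hV hVneg
  have hθD := hasSum_theta_mul hD hDneg
  refine ⟨hV, hθ, ?_, ?_, ?_⟩
  · convert hD.add (hθ.mul_left (2 * μ)) using 1
    · funext n; simp only [Pi.mul_apply, dunklNum]; ring
    · ring
  · convert hθD.add (hθ.mul_left (2 * μ)) using 1
    · funext n
      simp only [Pi.mul_apply, dunklNum]
      linear_combination 2 * μ * v n * theta_mul_self n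
    · ring
  · convert ((hD2.add hD).add (hθD.mul_left (4 * μ))).add (hθ.mul_left (4 * μ ^ 2)) using 1
    · funext n
      simp only [Pi.mul_apply, dunklNum]
      linear_combination 4 * μ ^ 2 * v n * theta_mul_self n
    · ring

lemma gamma_weight_second_moment {s b : ℝ} (hs : -1 < s) (hb : 0 < b) :
    b ^ (s + 1) / Real.Gamma (s + 1) *
        ∫ t in Set.Ioi (0 : ℝ), Real.exp (-b * t) * t ^ s * t ^ 2 =
      (s + 1) * (s + 2) / b ^ 2 := by
  have hint : ∫ t in Set.Ioi (0 : ℝ), Real.exp (-b * t) * t ^ s * t ^ 2 =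
      (1 / b) ^ (s + 3) * Real.Gamma (s + 3) := by
    rw [← Real.integral_rpow_mul_exp_neg_mul_Ioi (by linarith) hb]
    refine setIntegral_congr_fun measurableSet_Ioi fun t ht => ?_
    rw [show s + 3 - 1 = s + 2 by ring, Real.rpow_add ht, Real.rpow_two, neg_mul]
    ring
  have hΓ : Real.Gamma (s + 3) = (s + 2) * ((s + 1) * Real.Gamma (s + 1)) := by
    rw [show s + 3 = s + 2 + 1 by ring, Real.Gamma_add_one (by linarith),
      show s + 2 = s + 1 + 1 by ring, Real.Gamma_add_one (by linarith)]
  have hpow : (1 / b) ^ (s + 3) = (b ^ (s + 1) * b ^ 2)⁻¹ := by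
    rw [one_div, Real.inv_rpow hb.le, ← Real.rpow_two, ← Real.rpow_add hb]
    ring_nf
  have := Real.Gamma_pos_of_pos (show 0 < s + 1 by linarith)
  have := Real.rpow_pos_of_pos hb (s + 1)
  rw [hint, hΓ, hpow]
  field_simp

lemma pk_div_gamRec {μ : ℝ} (hμ : 0 ≤ μ) (a : ℕ → ℝ) (y : ℝ) (k : ℕ) :
    pk μ a k y / gamRec μ k = cauchyProduct (dunklTerm μ y) (fun r => a r / gamRec μ r) k := by
  rw [pk, cauchyProduct, Nat.sum_antidiagonal_eq_sum_range_succ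
    (fun i j => dunklTerm μ y i * (a j / gamRec μ j)), sum_div]
  refine sum_congr rfl fun j _ => ?_
  have := (gamRec_pos hμ k).ne'
  have := (gamRec_pos hμ j).ne'
  have := (gamRec_pos hμ (k - j)).ne'
  rw [dunklTerm]
  field_simp

lemma Dop_sq_eq {μ lam : ℝ} (hμ : 0 ≤ μ) (hlam : -1 < lam) (a : ℕ → ℝ) {n : ℕ}
    (hn : 0 < n) (x : ℝ) :
    Dop μ lam a n (fun t => t ^ 2) x =
      (∑' k, (dunklNum μ k + lam + 1) * (dunklNum μ k + lam + 2) *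
        cauchyProduct (dunklTerm μ (n * x)) (fun r => a r / gamRec μ r) k) /
      (n ^ 2 * (emu μ (n * x) * Afun μ a 1)) := by
  have hterm : ∀ k : ℕ, pk μ a k (n * x) / gamRec μ k *
      ((n : ℝ) ^ ((k : ℝ) + 2 * μ * theta k + lam + 1) /
        Real.Gamma ((k : ℝ) + 2 * μ * theta k + lam + 1)) *
      (∫ t in Set.Ioi (0 : ℝ),
        Real.exp (-(n : ℝ) * t) * t ^ ((k : ℝ) + 2 * μ * theta k + lam) * t ^ 2) =
      (dunklNum μ k + lam + 1) * (dunklNum μ k + lam + 2) *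
        cauchyProduct (dunklTerm μ (n * x)) (fun r => a r / gamRec μ r) k / n ^ 2 := by
    intro k
    have hs : -1 < (k : ℝ) + 2 * μ * theta k + lam := by
      have := natCast_le_dunklNum hμ k
      rw [dunklNum] at this
      linarith [k.cast_nonneg (α := ℝ)]
    rw [mul_assoc, gamma_weight_second_moment hs (Nat.cast_pos.2 hn), pk_div_gamRec hμ, dunklNum]
    ring
  rw [Dop, tsum_congr hterm, tsum_div_const]
  ring

theorem Dop_second_moment_general (μ lam : ℝ) (hμ : 0 ≤ μ) (hlam : 0 ≤ lam) (a : ℕ → ℝ)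
    (hA : AnalyticHyp μ a) (hA1 : Afun μ a 1 ≠ 0)
    (n : ℕ) (hn : 1 ≤ n) (x : ℝ) (hx : 0 ≤ x) :
    Dop μ lam a n (fun t => t ^ 2) x =
      x ^ 2 +
      (x / n) * (2 * μ * (emu μ (-(n * x)) / emu μ (n * x)) * (Afun μ a (-1) / Afun μ a 1) +
        2 * deriv (Afun μ a) 1 / Afun μ a 1 + 2 * lam + 4) +
      (2 * μ / (n : ℝ) ^ 2) * (emu μ (-(n * x)) / emu μ (n * x)) *
        ((deriv (Afun μ a) 1 + deriv (Afun μ a) (-1)) / Afun μ a 1) +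
      (2 * μ ^ 2 / (n : ℝ) ^ 2) * ((Afun μ a 1 - Afun μ a (-1)) / Afun μ a 1) +
      (μ * (2 * lam + 3) / (n : ℝ) ^ 2) * (emu μ (-(n * x)) / emu μ (n * x)) *
        ((Afun μ a 1 - Afun μ a (-1)) / Afun μ a 1) +
      (1 / (n : ℝ) ^ 2) * (deriv (deriv (Afun μ a)) 1 / Afun μ a 1 +
        (2 * lam + 4) * deriv (Afun μ a) 1 / Afun μ a 1 + (lam + 1) * (lam + 2)) := by
  have hn0 : (0 : ℝ) < n := by exact_mod_cast hn
  have hE : emu μ (n * x) ≠ 0 := (one_pos.trans_le (one_le_emu hμ (by positivity))).ne'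
  have hu := hasDunklMoments_dunklTerm hμ (n * x)
  have hv := hasDunklMoments_coeff hA
  have hS := ((hu.hasSum_dunklNum_sq_mul_cauchyProduct hv).add
    ((hu.hasSum_dunklNum_mul_cauchyProduct hv).mul_left (2 * lam + 3))).add
    ((hasSum_cauchyProduct hu.hasSum hv.hasSum).mul_left ((lam + 1) * (lam + 2)))
  rw [Dop_sq_eq hμ (by linarith) a hn x, (hS.congr_fun fun k => by ring).tsum_eq]
  field_simp
  ring

theorem Dop_second_moment (μ lam : ℝ) (hμ : 0 ≤ μ) (hlam : 0 ≤ lam) (a : ℕ → ℝ) (ha0 : a 0 ≠ 0)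
    (hA : AnalyticHyp μ a) (hA1 : Afun μ a 1 ≠ 0)
    (hpos : ∀ r : ℕ, 0 ≤ a r / Afun μ a 1)
    (n : ℕ) (hn : 1 ≤ n) (x : ℝ) (hx : 0 ≤ x) :
    Dop μ lam a n (fun t => t ^ 2) x =
      x ^ 2 +
      (x / n) * (2 * μ * (emu μ (-(n * x)) / emu μ (n * x)) * (Afun μ a (-1) / Afun μ a 1) +
        2 * deriv (Afun μ a) 1 / Afun μ a 1 + 2 * lam + 4) +
      (2 * μ / (n : ℝ) ^ 2) * (emu μ (-(n * x)) / emu μ (n * x)) *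
        ((deriv (Afun μ a) 1 + deriv (Afun μ a) (-1)) / Afun μ a 1) +
      (2 * μ ^ 2 / (n : ℝ) ^ 2) * ((Afun μ a 1 - Afun μ a (-1)) / Afun μ a 1) +
      (μ * (2 * lam + 3) / (n : ℝ) ^ 2) * (emu μ (-(n * x)) / emu μ (n * x)) *
        ((Afun μ a 1 - Afun μ a (-1)) / Afun μ a 1) +
      (1 / (n : ℝ) ^ 2) * (deriv (deriv (Afun μ a)) 1 / Afun μ a 1 +
        (2 * lam + 4) * deriv (Afun μ a) 1 / Afun μ a 1 + (lam + 1) * (lam + 2)) :=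
  Dop_second_moment_general μ lam hμ hlam a hA hA1 n hn x hx
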